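/- arXiv:math/0702535 — 3 statements merged into one kernel-verified Lean document; each statement's English description precedes it below -/
import Mathlib

section
/- Given a monad (t, μ, η) on an object A and a monad (s, ν, σ) on the same object A in a 2-category, and a distributive law λ : t∘s → s∘t (satisfying the four compatibility axioms with the units and multiplications of s and t), the composite s∘t carries a monad structure with multiplication (ν∘μ) ∘ (s∘λ∘t) : stst → sstt → st and unit σ∘η (suitably composed with unit isomorphisms). -/
open CategoryTheory CategoryTheory.Bicategory

universe w v u

/-- A monad structure on an endo-1-cell `t : a ⟶ a` in a bicategory. -/
structure MonadOn {B : Type u} [Bicategory.{w, v} B] {a : B} (t : a ⟶ a) where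
  mul : t ≫ t ⟶ t
  unit : 𝟙 a ⟶ t
  assoc : (α_ t t t).inv ≫ (mul ▷ t) ≫ mul = (t ◁ mul) ≫ mul
  left_unit : (λ_ t).inv ≫ (unit ▷ t) ≫ mul = 𝟙 t
  right_unit : (ρ_ t).inv ≫ (t ◁ unit) ≫ mul = 𝟙 t

section

variable {B : Type u} [Bicategory.{w, v} B] {a : B} {t s : a ⟶ a}
  (Mt : MonadOn t) (Ms : MonadOn s)

/- Below, 1-cells are written in diagrammatic order, so the classical composite
`s ∘ t` ("first `t`, then `s`") is `t ≫ s`, and a distributive law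
`λ : t ∘ s ⟶ s ∘ t` is a 2-cell `dlaw : s ≫ t ⟶ t ≫ s`. -/

/-- The four axioms of a distributive law `λ : t∘s ⟶ s∘t` between monads
`(t, μ_t, η_t)` and `(s, μ_s, η_s)`: compatibility with the multiplication and
the unit of each of the two monads. -/
structure IsDistributiveLaw (dlaw : s ≫ t ⟶ t ≫ s) : Prop where
  mul_t : (s ◁ Mt.mul) ≫ dlaw =
    (α_ s t t).inv ≫ (dlaw ▷ t) ≫ (α_ t s t).hom ≫ (t ◁ dlaw) ≫
      (α_ t t s).inv ≫ (Mt.mul ▷ s)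
  mul_s : (Ms.mul ▷ t) ≫ dlaw =
    (α_ s s t).hom ≫ (s ◁ dlaw) ≫ (α_ s t s).inv ≫ (dlaw ▷ s) ≫
      (α_ t s s).hom ≫ (t ◁ Ms.mul)
  unit_t : (ρ_ s).inv ≫ (s ◁ Mt.unit) ≫ dlaw = (λ_ s).inv ≫ (Mt.unit ▷ s)
  unit_s : (λ_ t).inv ≫ (Ms.unit ▷ t) ≫ dlaw = (ρ_ t).inv ≫ (t ◁ Ms.unit)

lemma exch (p q r : a ⟶ a) {f g h i : a ⟶ a} (η : f ⟶ g) (θ : h ⟶ i) :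
    p ◁ (η ▷ (q ≫ h ≫ r)) ≫ p ◁ (g ◁ (q ◁ (θ ▷ r))) =
      p ◁ (f ◁ (q ◁ (θ ▷ r))) ≫ p ◁ (η ▷ (q ≫ i ≫ r)) := by
  simp only [← Bicategory.whiskerLeft_comp]
  exact congrArg (fun x => p ◁ x) (Bicategory.whisker_exchange η (q ◁ (θ ▷ r))).symm

lemma comp_left_unit (dlaw : s ≫ t ⟶ t ≫ s) (H : IsDistributiveLaw Mt Ms dlaw) :
    (λ_ (t ≫ s)).inv ≫
      (((λ_ (𝟙 a)).inv ≫ (Mt.unit ▷ 𝟙 a) ≫ (t ◁ Ms.unit)) ▷ (t ≫ s)) ≫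
      ((α_ t s (t ≫ s)).hom ≫
        (t ◁ ((α_ s t s).inv ≫ (dlaw ▷ s) ≫ (α_ t s s).hom ≫ (t ◁ Ms.mul))) ≫
        (α_ t t s).inv ≫ (Mt.mul ▷ s)) = 𝟙 (t ≫ s) := by
  calc
    _ = 𝟙 (t ≫ s) ⊗≫ Mt.unit ▷ (t ≫ s) ⊗≫
        t ◁ (((λ_ t).inv ≫ (Ms.unit ▷ t) ≫ dlaw) ▷ s) ⊗≫
        t ◁ (t ◁ Ms.mul) ⊗≫ Mt.mul ▷ s := by bicategory
    _ = 𝟙 (t ≫ s) ⊗≫ Mt.unit ▷ (t ≫ s) ⊗≫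
        (t ≫ t) ◁ ((λ_ s).inv ≫ (Ms.unit ▷ s) ≫ Ms.mul) ⊗≫ Mt.mul ▷ s := by
      rw [H.unit_s]; bicategory
    _ = 𝟙 (t ≫ s) ⊗≫ ((λ_ t).inv ≫ (Mt.unit ▷ t) ≫ Mt.mul) ▷ s ⊗≫ 𝟙 (t ≫ s) := by
      rw [Ms.left_unit]; bicategory
    _ = 𝟙 (t ≫ s) := by rw [Mt.left_unit]; bicategory


lemma comp_right_unit (dlaw : s ≫ t ⟶ t ≫ s) (H : IsDistributiveLaw Mt Ms dlaw) :
    (ρ_ (t ≫ s)).inv ≫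
      ((t ≫ s) ◁ ((λ_ (𝟙 a)).inv ≫ (Mt.unit ▷ 𝟙 a) ≫ (t ◁ Ms.unit))) ≫
      ((α_ t s (t ≫ s)).hom ≫
        (t ◁ ((α_ s t s).inv ≫ (dlaw ▷ s) ≫ (α_ t s s).hom ≫ (t ◁ Ms.mul))) ≫
        (α_ t t s).inv ≫ (Mt.mul ▷ s)) = 𝟙 (t ≫ s) := by
  calc
    _ = 𝟙 (t ≫ s) ⊗≫ t ◁ (s ◁ Mt.unit) ⊗≫
        (t ◁ ((s ≫ t) ◁ (𝟙 a ◁ (Ms.unit ▷ 𝟙 a))) ≫ t ◁ (dlaw ▷ (𝟙 a ≫ s ≫ 𝟙 a))) ⊗≫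
        (t ≫ t) ◁ Ms.mul ⊗≫ Mt.mul ▷ s := by bicategory
    _ = 𝟙 (t ≫ s) ⊗≫ t ◁ ((ρ_ s).inv ≫ (s ◁ Mt.unit) ≫ dlaw) ⊗≫
        (t ≫ t) ◁ ((ρ_ s).inv ≫ (s ◁ Ms.unit) ≫ Ms.mul) ⊗≫ Mt.mul ▷ s := by
      rw [← exch t (𝟙 a) (𝟙 a) dlaw Ms.unit]; bicategory
    _ = 𝟙 (t ≫ s) ⊗≫ ((ρ_ t).inv ≫ (t ◁ Mt.unit) ≫ Mt.mul) ▷ s ⊗≫ 𝟙 (t ≫ s) := by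
      rw [H.unit_t, Ms.right_unit]; bicategory
    _ = 𝟙 (t ≫ s) := by rw [Mt.right_unit]; bicategory


lemma comp_assoc (dlaw : s ≫ t ⟶ t ≫ s) (H : IsDistributiveLaw Mt Ms dlaw) :
    (α_ (t ≫ s) (t ≫ s) (t ≫ s)).inv ≫
      (((α_ t s (t ≫ s)).hom ≫
        (t ◁ ((α_ s t s).inv ≫ (dlaw ▷ s) ≫ (α_ t s s).hom ≫ (t ◁ Ms.mul))) ≫
        (α_ t t s).inv ≫ (Mt.mul ▷ s)) ▷ (t ≫ s)) ≫
      ((α_ t s (t ≫ s)).hom ≫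
        (t ◁ ((α_ s t s).inv ≫ (dlaw ▷ s) ≫ (α_ t s s).hom ≫ (t ◁ Ms.mul))) ≫
        (α_ t t s).inv ≫ (Mt.mul ▷ s)) =
    ((t ≫ s) ◁ ((α_ t s (t ≫ s)).hom ≫
        (t ◁ ((α_ s t s).inv ≫ (dlaw ▷ s) ≫ (α_ t s s).hom ≫ (t ◁ Ms.mul))) ≫
        (α_ t t s).inv ≫ (Mt.mul ▷ s))) ≫
      ((α_ t s (t ≫ s)).hom ≫
        (t ◁ ((α_ s t s).inv ≫ (dlaw ▷ s) ≫ (α_ t s s).hom ≫ (t ◁ Ms.mul))) ≫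
        (α_ t t s).inv ≫ (Mt.mul ▷ s)) := by
  trans (𝟙 ((t ≫ s) ≫ (t ≫ s) ≫ (t ≫ s)) ⊗≫ (t ≫ s ≫ t) ◁ (dlaw ▷ s) ⊗≫
      t ◁ (dlaw ▷ (t ≫ s ≫ s)) ⊗≫ (t ≫ t) ◁ (dlaw ▷ (s ≫ s)) ⊗≫
      (t ≫ t ≫ t) ◁ ((s ◁ Ms.mul) ≫ Ms.mul) ⊗≫ ((t ◁ Mt.mul) ≫ Mt.mul) ▷ s)
  · calc
      _ = 𝟙 ((t ≫ s) ≫ (t ≫ s) ≫ (t ≫ s)) ⊗≫ t ◁ (dlaw ▷ (s ≫ t ≫ s)) ⊗≫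
          (t ≫ t) ◁ (Ms.mul ▷ (t ≫ s)) ⊗≫
          (𝟙 a ◁ (Mt.mul ▷ (𝟙 a ≫ (s ≫ t) ≫ s)) ≫
            𝟙 a ◁ (t ◁ (𝟙 a ◁ (dlaw ▷ s)))) ⊗≫
          (t ≫ t) ◁ Ms.mul ⊗≫ Mt.mul ▷ s := by bicategory
      _ = 𝟙 ((t ≫ s) ≫ (t ≫ s) ≫ (t ≫ s)) ⊗≫ t ◁ (dlaw ▷ (s ≫ t ≫ s)) ⊗≫
          (t ≫ t) ◁ (Ms.mul ▷ (t ≫ s)) ⊗≫ (t ≫ t) ◁ (dlaw ▷ s) ⊗≫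
          (𝟙 a ◁ (Mt.mul ▷ (t ≫ (s ≫ s) ≫ 𝟙 a)) ≫
            𝟙 a ◁ (t ◁ (t ◁ (Ms.mul ▷ 𝟙 a)))) ⊗≫
          Mt.mul ▷ s := by
        rw [exch (𝟙 a) (𝟙 a) s Mt.mul dlaw]; bicategory
      _ = 𝟙 ((t ≫ s) ≫ (t ≫ s) ≫ (t ≫ s)) ⊗≫ t ◁ (dlaw ▷ (s ≫ t ≫ s)) ⊗≫
          (t ≫ t) ◁ (((Ms.mul ▷ t) ≫ dlaw) ▷ s) ⊗≫ (t ≫ t ≫ t) ◁ Ms.mul ⊗≫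
          ((α_ t t t).inv ≫ (Mt.mul ▷ t) ≫ Mt.mul) ▷ s := by
        rw [exch (𝟙 a) t (𝟙 a) Mt.mul Ms.mul]; bicategory
      _ = 𝟙 ((t ≫ s) ≫ (t ≫ s) ≫ (t ≫ s)) ⊗≫
          (t ◁ (dlaw ▷ (𝟙 a ≫ (s ≫ t) ≫ s)) ≫
            t ◁ ((t ≫ s) ◁ (𝟙 a ◁ (dlaw ▷ s)))) ⊗≫
          (t ≫ t) ◁ (dlaw ▷ (s ≫ s)) ⊗≫
          (t ≫ t ≫ t) ◁ ((α_ s s s).inv ≫ (Ms.mul ▷ s) ≫ Ms.mul) ⊗≫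
          ((α_ t t t).inv ≫ (Mt.mul ▷ t) ≫ Mt.mul) ▷ s := by
        rw [H.mul_s]; bicategory
      _ = _ := by
        rw [exch t (𝟙 a) s dlaw dlaw, Ms.assoc, Mt.assoc]; bicategory
  · symm
    calc
      _ = 𝟙 ((t ≫ s) ≫ (t ≫ s) ≫ (t ≫ s)) ⊗≫ (t ≫ s ≫ t) ◁ (dlaw ▷ s) ⊗≫
          ((t ≫ s) ◁ ((t ≫ t) ◁ (𝟙 a ◁ (Ms.mul ▷ 𝟙 a))) ≫
            (t ≫ s) ◁ (Mt.mul ▷ (𝟙 a ≫ s ≫ 𝟙 a))) ⊗≫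
          t ◁ (dlaw ▷ s) ⊗≫ (t ≫ t) ◁ Ms.mul ⊗≫ Mt.mul ▷ s := by bicategory
      _ = 𝟙 ((t ≫ s) ≫ (t ≫ s) ≫ (t ≫ s)) ⊗≫ (t ≫ s ≫ t) ◁ (dlaw ▷ s) ⊗≫
          (t ≫ s) ◁ (Mt.mul ▷ (s ≫ s)) ⊗≫
          (t ◁ ((s ≫ t) ◁ (𝟙 a ◁ (Ms.mul ▷ 𝟙 a))) ≫
            t ◁ (dlaw ▷ (𝟙 a ≫ s ≫ 𝟙 a))) ⊗≫
          (t ≫ t) ◁ Ms.mul ⊗≫ Mt.mul ▷ s := by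
        rw [← exch (t ≫ s) (𝟙 a) (𝟙 a) Mt.mul Ms.mul]; bicategory
      _ = 𝟙 ((t ≫ s) ≫ (t ≫ s) ≫ (t ≫ s)) ⊗≫ (t ≫ s ≫ t) ◁ (dlaw ▷ s) ⊗≫
          t ◁ (((s ◁ Mt.mul) ≫ dlaw) ▷ (s ≫ s)) ⊗≫
          (t ≫ t ≫ s) ◁ Ms.mul ⊗≫ (t ≫ t) ◁ Ms.mul ⊗≫ Mt.mul ▷ s := by
        rw [← exch t (𝟙 a) (𝟙 a) dlaw Ms.mul]; bicategory
      _ = 𝟙 ((t ≫ s) ≫ (t ≫ s) ≫ (t ≫ s)) ⊗≫ (t ≫ s ≫ t) ◁ (dlaw ▷ s) ⊗≫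
          t ◁ (dlaw ▷ (t ≫ s ≫ s)) ⊗≫ (t ≫ t) ◁ (dlaw ▷ (s ≫ s)) ⊗≫
          (t ◁ (Mt.mul ▷ (s ≫ (s ≫ s) ≫ 𝟙 a)) ≫
            t ◁ (t ◁ (s ◁ (Ms.mul ▷ 𝟙 a)))) ⊗≫
          (t ≫ t) ◁ Ms.mul ⊗≫ Mt.mul ▷ s := by
        rw [H.mul_t]; bicategory
      _ = 𝟙 ((t ≫ s) ≫ (t ≫ s) ≫ (t ≫ s)) ⊗≫ (t ≫ s ≫ t) ◁ (dlaw ▷ s) ⊗≫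
          t ◁ (dlaw ▷ (t ≫ s ≫ s)) ⊗≫ (t ≫ t) ◁ (dlaw ▷ (s ≫ s)) ⊗≫
          (t ≫ t ≫ t) ◁ (s ◁ Ms.mul) ⊗≫
          (t ◁ (Mt.mul ▷ (𝟙 a ≫ (s ≫ s) ≫ 𝟙 a)) ≫
            t ◁ (t ◁ (𝟙 a ◁ (Ms.mul ▷ 𝟙 a)))) ⊗≫
          Mt.mul ▷ s := by
        rw [exch t s (𝟙 a) Mt.mul Ms.mul]; bicategory
      _ = _ := by
        rw [exch t (𝟙 a) (𝟙 a) Mt.mul Ms.mul]; bicategory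

/-- Given a distributive law `λ : t∘s ⟶ s∘t` between monads `(t, μ, η)` and
`(s, ν, σ)` on the same object of a 2-category, the composite 1-cell `s∘t`
carries a monad structure, with multiplication
`(ν∘μ) ∘ (s∘λ∘t) : stst ⟶ sstt ⟶ st` and unit `σ∘η` (composed with the unit
isomorphisms). -/
theorem distributive_law_composite_monad (dlaw : s ≫ t ⟶ t ≫ s)
    (H : IsDistributiveLaw Mt Ms dlaw) :
    ∃ M : MonadOn (t ≫ s),
      M.mul =
        (α_ t s (t ≫ s)).hom ≫
          (t ◁ ((α_ s t s).inv ≫ (dlaw ▷ s) ≫ (α_ t s s).hom ≫ (t ◁ Ms.mul))) ≫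
          (α_ t t s).inv ≫ (Mt.mul ▷ s) ∧
      M.unit = (λ_ (𝟙 a)).inv ≫ (Mt.unit ▷ 𝟙 a) ≫ (t ◁ Ms.unit) := by
  exact ⟨⟨(α_ t s (t ≫ s)).hom ≫
      (t ◁ ((α_ s t s).inv ≫ (dlaw ▷ s) ≫ (α_ t s s).hom ≫ (t ◁ Ms.mul))) ≫
      (α_ t t s).inv ≫ (Mt.mul ▷ s),
    (λ_ (𝟙 a)).inv ≫ (Mt.unit ▷ 𝟙 a) ≫ (t ◁ Ms.unit),
    comp_assoc Mt Ms dlaw H, comp_left_unit Mt Ms dlaw H,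
    comp_right_unit Mt Ms dlaw H⟩, rfl, rfl⟩

end
end

section
/- The category of 2-categories and pseudofunctors does not have all pushouts: the pushout of the two inclusions of the terminal 2-category 1 into the free arrow 2-category [1] (as the source object and as the target object, respectively) does not exist in the category of 2-categories and pseudofunctors. -/
open CategoryTheory CategoryTheory.Bicategory

/-- A (small) 2-category: a type equipped with a bicategory structure
(all of whose data lives in `Type 0`). -/
structure TwoCatObj where
  carrier : Type
  str : Bicategory.{0, 0} carrier

attribute [instance] TwoCatObj.str

/-- The free arrow 2-category `[1] = {0 → 1}`, a locally discrete 2-category. -/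
abbrev ArrowTwoCat : Type := LocallyDiscrete (Fin 2)

/-- The terminal 2-category `1`. -/
abbrev OneTwoCat : Type := LocallyDiscrete (Discrete PUnit)

/-- The pseudofunctor `1 ⟶ [1]` picking out the target object `1 ∈ [1]`. -/
noncomputable def pickOne : Pseudofunctor OneTwoCat ArrowTwoCat :=
  ((Functor.const (Discrete PUnit)).obj (⟨(1 : Fin 2)⟩ : ArrowTwoCat)).toPseudofunctor'

/-- The pseudofunctor `1 ⟶ [1]` picking out the source object `0 ∈ [1]`. -/
noncomputable def pickZero : Pseudofunctor OneTwoCat ArrowTwoCat :=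
  ((Functor.const (Discrete PUnit)).obj (⟨(0 : Fin 2)⟩ : ArrowTwoCat)).toPseudofunctor'

/-- `(P, j₀, j₁)` is a pushout, in the category of 2-categories and
pseudofunctors, of the span formed by the two inclusions of the terminal
2-category `1` into the arrow 2-category `[1]` (as the target object in the
first copy and the source object in the second copy). -/
def IsPushoutCocone (P : TwoCatObj)
    (j₀ j₁ : Pseudofunctor ArrowTwoCat P.carrier) : Prop :=
  pickOne.comp j₀ = pickZero.comp j₁ ∧
  ∀ (Q : TwoCatObj) (k₀ k₁ : Pseudofunctor ArrowTwoCat Q.carrier),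
    pickOne.comp k₀ = pickZero.comp k₁ →
    ∃! h : Pseudofunctor P.carrier Q.carrier, j₀.comp h = k₀ ∧ j₁.comp h = k₁

/-!
Let `Q` be the 2-category with objects `x, y, z`, hom-sets `Bool` and exactly one 2-cell between
any two parallel 1-cells; any assignment on objects and 1-cells is then a pseudofunctor into `Q`.
The cocone on `Q` sending the two copies of `[1]` to `x ⟶ y` and `y ⟶ z` is fixed by the
automorphism of `Q` negating the 1-cells `x ⟶ z`. In a pushout `P` the two copies of `[1]` compose
to a 1-cell from a point over `x` to a point over `z`, whose image that automorphism changes, so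
the mediating pseudofunctor `P ⥤ᵖ Q` and its composite with the automorphism are two distinct
mediators.
-/

universe v u w₁ v₁ u₁ w₂ v₂ u₂ w₃ v₃ u₃

namespace CategoryTheory

structure Chaotic (C : Type u) where
  as : C

namespace Chaotic

variable {C : Type u} [CategoryStruct.{v} C]

instance : CategoryStruct.{v} (Chaotic C) where
  Hom a b := a.as ⟶ b.as
  id a := 𝟙 a.as
  comp f g := f ≫ g

instance (a b : Chaotic C) : Category.{0} (a ⟶ b) where
  Hom _ _ := Unit
  id _ := ()
  comp _ _ := ()

instance {a b : Chaotic C} (f g : a ⟶ b) : Subsingleton (f ⟶ g) :=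
  inferInstanceAs (Subsingleton Unit)

instance {a b : Chaotic C} (f g : a ⟶ b) : Subsingleton (f ≅ g) :=
  ⟨fun _ _ => Iso.ext (Subsingleton.elim _ _)⟩

def iso {a b : Chaotic C} (f g : a ⟶ b) : f ≅ g := ⟨(), (), rfl, rfl⟩

instance : Bicategory.{0, v} (Chaotic C) where
  whiskerLeft _ _ _ _ := ()
  whiskerRight _ _ := ()
  associator _ _ _ := iso _ _
  leftUnitor _ := iso _ _
  rightUnitor _ := iso _ _

variable {B : Type u₁} [Bicategory.{w₁, v₁} B]

def pseudofunctor (obj : B → Chaotic C) (map : ∀ {a b : B}, (a ⟶ b) → (obj a ⟶ obj b)) :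
    B ⥤ᵖ Chaotic C where
  obj := obj
  map := map
  map₂ _ := ()
  mapId _ := iso _ _
  mapComp _ _ := iso _ _

theorem pseudofunctor_ext {F G : B ⥤ᵖ Chaotic C} (hobj : ∀ a, F.obj a = G.obj a)
    (hmap : ∀ {a b : B} (f : a ⟶ b), F.map f ≍ G.map f) : F = G := by
  obtain ⟨⟨⟨⟨obj, map⟩, map₂⟩, _, _⟩, mapId, mapComp, _, _, _, _, _⟩ := F
  obtain ⟨⟨⟨⟨obj', map'⟩, map₂'⟩, _, _⟩, mapId', mapComp', _, _, _, _, _⟩ := G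
  obtain rfl : obj = obj' := funext hobj
  obtain rfl : @map = @map' := by
    funext a b f
    exact eq_of_heq (hmap f)
  obtain rfl : @map₂ = @map₂' := by
    funext a b f g η
    exact Subsingleton.elim _ _
  obtain rfl : @mapId = @mapId' := by
    funext a
    exact Subsingleton.elim _ _
  obtain rfl : @mapComp = @mapComp' := by
    funext a b c f g
    exact Subsingleton.elim _ _
  rfl

theorem comp_assoc {B' : Type u₂} [Bicategory.{w₂, v₂} B'] (F : B ⥤ᵖ B')
    {D : Type u₃} [Bicategory.{w₃, v₃} D] (G : B' ⥤ᵖ D) (H : D ⥤ᵖ Chaotic C) :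
    (F.comp G).comp H = F.comp (G.comp H) :=
  pseudofunctor_ext (fun _ => rfl) (fun _ => HEq.rfl)

end Chaotic

end CategoryTheory

inductive Tri : Type
  | x | y | z
  deriving DecidableEq

namespace Tri

instance : CategoryStruct.{0} Tri where
  Hom _ _ := Bool
  id _ := false
  comp := xor

def flipXZ : Chaotic Tri ⥤ᵖ Chaotic Tri :=
  Chaotic.pseudofunctor (B := Chaotic Tri) id fun {a b} f =>
    if a.as = x ∧ b.as = z then !f else f

variable {B : Type u₁} [Bicategory.{w₁, v₁} B]

theorem comp_flipXZ_eq_self (F : B ⥤ᵖ Chaotic Tri)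
    (hF : ∀ a b, (F.obj a).as = x → (F.obj b).as ≠ z) : F.comp flipXZ = F :=
  Chaotic.pseudofunctor_ext (fun _ => rfl) fun {a b} _ =>
    heq_of_eq (if_neg fun h => hF a b h.1 h.2)

theorem comp_flipXZ_ne_self (F : B ⥤ᵖ Chaotic Tri) {a c : B} (ha : (F.obj a).as = x)
    (hc : (F.obj c).as = z) (f : a ⟶ c) : F.comp flipXZ ≠ F := fun h => by
  have hf : (F.comp flipXZ).map f = F.map f := eq_of_heq (congr_arg_heq (·.map f) h)
  change (if (F.obj a).as = x ∧ (F.obj c).as = z then !F.map f else F.map f) = F.map f at hf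
  rw [if_pos ⟨ha, hc⟩] at hf
  exact Bool.not_ne_self _ hf

def arrowXY : ArrowTwoCat ⥤ᵖ Chaotic Tri :=
  Chaotic.pseudofunctor (fun d => ⟨![x, y] d.as⟩) fun _ => false

def arrowYZ : ArrowTwoCat ⥤ᵖ Chaotic Tri :=
  Chaotic.pseudofunctor (fun d => ⟨![y, z] d.as⟩) fun _ => false

theorem pickOne_comp_arrowXY_eq_pickZero_comp_arrowYZ :
    pickOne.comp arrowXY = pickZero.comp arrowYZ :=
  Chaotic.pseudofunctor_ext (fun _ => rfl) fun _ => HEq.rfl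

theorem arrowXY_comp_flipXZ : arrowXY.comp flipXZ = arrowXY :=
  comp_flipXZ_eq_self _ fun _ b _ => by rcases b with ⟨b⟩; fin_cases b <;> decide

theorem arrowYZ_comp_flipXZ : arrowYZ.comp flipXZ = arrowYZ :=
  comp_flipXZ_eq_self _ fun a _ ha => absurd ha (by rcases a with ⟨a⟩; fin_cases a <;> decide)

end Tri

section Cocone

variable {P : Type u₁} [Bicategory.{w₁, v₁} P] {j₀ j₁ : ArrowTwoCat ⥤ᵖ P}

theorem obj_one_eq_obj_zero_of_cocone (h : pickOne.comp j₀ = pickZero.comp j₁) :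
    j₀.obj ⟨1⟩ = j₁.obj ⟨0⟩ :=
  congrArg (·.obj ⟨⟨⟨⟩⟩⟩) h

theorem nonempty_hom_of_cocone (h : pickOne.comp j₀ = pickZero.comp j₁) :
    Nonempty (j₀.obj ⟨0⟩ ⟶ j₁.obj ⟨1⟩) :=
  let arrow : (⟨0⟩ : ArrowTwoCat) ⟶ ⟨1⟩ := (homOfLE (by decide) : (0 : Fin 2) ⟶ 1).toLoc
  ⟨j₀.map arrow ≫ eqToHom (obj_one_eq_obj_zero_of_cocone h) ≫ j₁.map arrow⟩

end Cocone

/-- The category of 2-categories and pseudofunctors does not have all pushouts: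
the pushout of the two inclusions of the terminal 2-category `1` into the free
arrow 2-category `[1]` (as target object and as source object respectively)
does not exist. -/
theorem no_pushout_of_arrows_in_2Cat_ps :
    ¬ ∃ (P : TwoCatObj) (j₀ j₁ : Pseudofunctor ArrowTwoCat P.carrier),
        IsPushoutCocone P j₀ j₁ := by
  rintro ⟨P, j₀, j₁, hcocone, huniv⟩
  obtain ⟨h, ⟨hh₀, hh₁⟩, huniq⟩ :=
    huniv ⟨Chaotic Tri, inferInstance⟩ Tri.arrowXY Tri.arrowYZ
      Tri.pickOne_comp_arrowXY_eq_pickZero_comp_arrowYZ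
  have hflip : h.comp Tri.flipXZ = h := by
    refine huniq _ ⟨?_, ?_⟩
    · rw [← Chaotic.comp_assoc, hh₀, Tri.arrowXY_comp_flipXZ]
    · rw [← Chaotic.comp_assoc, hh₁, Tri.arrowYZ_comp_flipXZ]
  obtain ⟨m⟩ := nonempty_hom_of_cocone hcocone
  exact Tri.comp_flipXZ_ne_self h
    (congrArg (fun G => (G.obj ⟨0⟩).as) hh₀) (congrArg (fun G => (G.obj ⟨1⟩).as) hh₁) m hflip
end

section
/- In a 2-category, a right lifting u of the identity 1_B through f : A → B is a right adjoint to f if and only if it is absolute, i.e. for every b : X → B, the composite u∘b is the right lifting of b through f. -/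
open CategoryTheory CategoryTheory.Bicategory

universe w v u

variable {B : Type u} [Bicategory.{w, v} B]

/-- `(r, lam)` is a right lifting of `p : x ⟶ b` through `f : a ⟶ b`:
pasting with `lam` gives a bijection between 2-cells `g ≫ f ⟶ p` and 2-cells
`g ⟶ r`, for every `g : x ⟶ a`. -/
def IsRightLifting {a b x : B} (f : a ⟶ b) (p : x ⟶ b)
    (r : x ⟶ a) (lam : r ≫ f ⟶ p) : Prop :=
  ∀ g : x ⟶ a, Function.Bijective (fun θ : g ⟶ r => (θ ▷ f) ≫ lam)

/-- In a 2-category, a right lifting `(u, lam)` of the identity `𝟙 b` through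
`f : a ⟶ b` is a right adjoint to `f` (with counit `lam`) if and only if the
lifting is absolute, i.e. for every `p : x ⟶ b` the composite `p ≫ u` (with
the evident pasted 2-cell) is the right lifting of `p` through `f`. -/
theorem right_lifting_of_identity_right_adjoint_iff_absolute
    {a b : B} (f : a ⟶ b) (u : b ⟶ a) (lam : u ≫ f ⟶ 𝟙 b)
    (hlift : IsRightLifting f (𝟙 b) u lam) :
    (∃ adj : Bicategory.Adjunction f u, adj.counit = lam) ↔
    (∀ (x : B) (p : x ⟶ b),
      IsRightLifting f p (p ≫ u) ((α_ p u f).hom ≫ (p ◁ lam) ≫ (ρ_ p).hom)) := by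
  constructor
  · rintro ⟨adj, rfl⟩
    intro x p g
    refine (Equiv.mk
      (fun θ : g ⟶ p ≫ u =>
        (θ ▷ f) ≫ ((α_ p u f).hom ≫ (p ◁ adj.counit) ≫ (ρ_ p).hom))
      (fun φ : g ≫ f ⟶ p => 𝟙 g ⊗≫ g ◁ adj.unit ⊗≫ φ ▷ u ⊗≫ 𝟙 (p ≫ u))
      ?_ ?_).bijective
    · intro θ
      dsimp only
      calc 𝟙 g ⊗≫ g ◁ adj.unit ⊗≫
              ((θ ▷ f) ≫ ((α_ p u f).hom ≫ (p ◁ adj.counit) ≫ (ρ_ p).hom)) ▷ u ⊗≫ 𝟙 (p ≫ u)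
          _ = 𝟙 g ⊗≫ (g ◁ adj.unit ≫ θ ▷ (f ≫ u)) ⊗≫ (p ◁ adj.counit) ▷ u ⊗≫ 𝟙 _ := by
            bicategory
          _ = 𝟙 g ⊗≫ θ ⊗≫ p ◁ rightZigzag adj.unit adj.counit ⊗≫ 𝟙 _ := by
            rw [whisker_exchange, rightZigzag]; bicategory
          _ = θ := by
            rw [adj.right_triangle]; bicategory
    · intro φ
      dsimp only
      calc ((𝟙 g ⊗≫ g ◁ adj.unit ⊗≫ φ ▷ u ⊗≫ 𝟙 (p ≫ u)) ▷ f) ≫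
              ((α_ p u f).hom ≫ (p ◁ adj.counit) ≫ (ρ_ p).hom)
          _ = 𝟙 _ ⊗≫ g ◁ adj.unit ▷ f ⊗≫ (φ ▷ (u ≫ f) ≫ p ◁ adj.counit) ⊗≫ 𝟙 _ := by
            bicategory
          _ = 𝟙 _ ⊗≫ g ◁ leftZigzag adj.unit adj.counit ⊗≫ φ ⊗≫ 𝟙 _ := by
            rw [← whisker_exchange, leftZigzag]; bicategory
          _ = φ := by
            rw [adj.left_triangle]; bicategory
  · intro h
    obtain ⟨η, hη⟩ := (h a f (𝟙 a)).2 ((λ_ f).hom)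
    dsimp only at hη
    have left_tri : leftZigzag η lam = (λ_ f).hom ≫ (ρ_ f).inv := by
      rw [← hη, leftZigzag]; bicategory
    have right_tri : rightZigzag η lam = (ρ_ u).hom ≫ (λ_ u).inv := by
      have key : ((ρ_ u).inv ≫ rightZigzag η lam ≫ (λ_ u).hom) = 𝟙 u := by
        apply (hlift u).1
        dsimp only
        calc (((ρ_ u).inv ≫ rightZigzag η lam ≫ (λ_ u).hom) ▷ f) ≫ lam
            _ = 𝟙 _ ⊗≫ u ◁ η ▷ f ⊗≫ (lam ▷ (u ≫ f) ≫ 𝟙 b ◁ lam) ⊗≫ 𝟙 _ := by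
              rw [rightZigzag]; bicategory
            _ = 𝟙 _ ⊗≫ u ◁ leftZigzag η lam ⊗≫ lam ⊗≫ 𝟙 _ := by
              rw [← whisker_exchange, leftZigzag]; bicategory
            _ = (𝟙 u ▷ f) ≫ lam := by
              rw [left_tri]; bicategory
      calc rightZigzag η lam
          _ = (ρ_ u).hom ≫ ((ρ_ u).inv ≫ rightZigzag η lam ≫ (λ_ u).hom) ≫ (λ_ u).inv := by
            simp
          _ = (ρ_ u).hom ≫ 𝟙 u ≫ (λ_ u).inv := by rw [key]
          _ = (ρ_ u).hom ≫ (λ_ u).inv := by simp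
    exact ⟨⟨η, lam, left_tri, right_tri⟩, rfl⟩
end
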